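/- arXiv:math/0511231 — 3 statements merged into one kernel-verified Lean document; each statement's English description precedes it below -/
import Mathlib

section
/- Let (Y, ν) be a measurable space with a finite measure ν, and (B_n)_{n∈ℕ} a sequence of measurable subsets of Y such that there exists a constant c > 0 with ν(B_n ∩ B_m) ≤ c·ν(B_n)·ν(B_m) for all distinct n, m. Let B_∞ = ⋂_{n∈ℕ} ⋃_{k≥n} B_k. Then ν(B_∞) > 0 if and only if the series ∑_{n=0}^∞ ν(B_n) diverges. -/
open MeasureTheory Set Filter
open scoped ENNReal NNReal

/-!
The direction `ν(B_∞) > 0 → ∑ ν(B_n) = ∞` is the first Borel–Cantelli lemma. Conversely, apply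
Cauchy–Schwarz to the counting function `N = ∑_{k ∈ F} 1_{B_k}` and the indicator of its support
`⋃_{k ∈ F} B_k` (the Chung–Erdős inequality):
`(∑_F ν(B_k))² ≤ ν(⋃_F B_k) · ∑_{k, m ∈ F} ν(B_k ∩ B_m)`.
Quasi-independence bounds the double sum by `T + c T²`, where `T = ∑_F ν(B_k)`, so once `T ≥ 1`
we get `ν(⋃_F B_k) ≥ 1 / (1 + c)`. Divergence of the series provides such blocks `F` inside every
tail, so every tail union, and hence their decreasing intersection `B_∞`, has measure at least
`1 / (1 + c)`.
-/

theorem ENNReal.exists_le_sum_Ico_of_tsum_eq_top {f : ℕ → ℝ≥0∞} (hf : ∀ i, f i ≠ ∞)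
    (hsum : ∑' i, f i = ∞) (n : ℕ) {a : ℝ≥0∞} (ha : a ≠ ∞) :
    ∃ N, a ≤ ∑ i ∈ Finset.Ico n N, f i := by
  have hhead : ∑ i ∈ Finset.range n, f i ≠ ∞ := ENNReal.sum_ne_top.2 fun i _ => hf i
  have hlarge : ∀ᶠ N in atTop, ∑ i ∈ Finset.range n, f i + a < ∑ i ∈ Finset.range N, f i :=
    (tendsto_order.1 (hsum ▸ ENNReal.tendsto_nat_tsum f)).1 _
      (ENNReal.add_lt_top.2 ⟨hhead.lt_top, ha.lt_top⟩)
  obtain ⟨N, hN, hnN⟩ := (hlarge.and (eventually_ge_atTop n)).exists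
  refine ⟨N, (ENNReal.add_le_add_iff_left hhead).1 ?_⟩
  rw [Finset.sum_range_add_sum_Ico f hnN]
  exact hN.le

namespace MeasureTheory

variable {α ι : Type*} [MeasurableSpace α] {μ : Measure α}

theorem lintegral_mul_sq_le {f g : α → ℝ≥0∞} (hf : AEMeasurable f μ) (hg : AEMeasurable g μ) :
    (∫⁻ a, f a * g a ∂μ) ^ 2 ≤ (∫⁻ a, f a ^ 2 ∂μ) * ∫⁻ a, g a ^ 2 ∂μ := by
  have h := ENNReal.lintegral_mul_le_Lp_mul_Lq μ Real.HolderConjugate.two_two hf hg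
  simp only [ENNReal.rpow_two, Pi.mul_apply] at h
  have hsqrt (x : ℝ≥0∞) : (x ^ (1 / 2 : ℝ)) ^ 2 = x := by
    rw [← ENNReal.rpow_natCast, ← ENNReal.rpow_mul]; norm_num
  calc _ ≤ ((∫⁻ a, f a ^ 2 ∂μ) ^ (1 / 2 : ℝ) * (∫⁻ a, g a ^ 2 ∂μ) ^ (1 / 2 : ℝ)) ^ 2 :=
        pow_le_pow_left' h 2
    _ = _ := by rw [mul_pow, hsqrt, hsqrt]

theorem sq_sum_measure_le_measure_biUnion_mul_sum_sum_measure_inter (s : Finset ι)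
    {B : ι → Set α} (hB : ∀ i, MeasurableSet (B i)) :
    (∑ i ∈ s, μ (B i)) ^ 2 ≤ μ (⋃ i ∈ s, B i) * ∑ i ∈ s, ∑ j ∈ s, μ (B i ∩ B j) := by
  set U := ⋃ i ∈ s, B i
  have hU : MeasurableSet U := s.measurableSet_biUnion fun i _ => hB i
  set N : α → ℝ≥0∞ := fun x => ∑ i ∈ s, (B i).indicator 1 x
  have hN : Measurable N := Finset.measurable_sum s fun i _ => measurable_one.indicator (hB i)
  have hmass : ∫⁻ x, U.indicator 1 x * N x ∂μ = ∑ i ∈ s, μ (B i) := by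
    have hsupp : N.support ⊆ U := (s.support_sum _).trans
      (iUnion₂_mono fun i _ => Set.support_indicator_subset)
    have hN_eq (x : α) : U.indicator 1 x * N x = N x := by
      rw [← Set.indicator_mul_left]
      simp only [Pi.one_apply, one_mul]
      exact congr_fun (Set.indicator_eq_self.2 hsupp) x
    simp_rw [hN_eq]
    rw [lintegral_finsetSum s fun i _ => measurable_one.indicator (hB i)]
    simp only [lintegral_indicator_one (hB _)]
  have hU_sq : ∫⁻ x, U.indicator 1 x ^ 2 ∂μ = μ U := by
    have h1U (x : α) : U.indicator (1 : α → ℝ≥0∞) x ^ 2 = U.indicator 1 x := by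
      by_cases hx : x ∈ U <;> simp [hx]
    simp_rw [h1U]
    exact lintegral_indicator_one hU
  have hN_sq : ∫⁻ x, N x ^ 2 ∂μ = ∑ i ∈ s, ∑ j ∈ s, μ (B i ∩ B j) := by
    have hN_sq_eq (x : α) : N x ^ 2 = ∑ i ∈ s, ∑ j ∈ s, (B i ∩ B j).indicator 1 x := by
      simp only [N, sq, Finset.sum_mul_sum, Set.inter_indicator_one, Pi.mul_apply]
    simp_rw [hN_sq_eq]
    rw [lintegral_finsetSum s fun i _ => Finset.measurable_sum s fun j _ =>
      measurable_one.indicator ((hB i).inter (hB j))]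
    refine Finset.sum_congr rfl fun i _ => ?_
    rw [lintegral_finsetSum s fun j _ => measurable_one.indicator ((hB i).inter (hB j))]
    simp only [lintegral_indicator_one ((hB _).inter (hB _))]
  rw [← hmass, ← hU_sq, ← hN_sq]
  exact lintegral_mul_sq_le (measurable_one.indicator hU).aemeasurable hN.aemeasurable

theorem sum_sum_measure_inter_le_of_quasi_indep {c : ℝ≥0∞} (s : Finset ι) {B : ι → Set α}
    (hquasi : ∀ i ∈ s, ∀ j ∈ s, i ≠ j → μ (B i ∩ B j) ≤ c * μ (B i) * μ (B j)) :
    ∑ i ∈ s, ∑ j ∈ s, μ (B i ∩ B j) ≤ ∑ i ∈ s, μ (B i) + c * (∑ i ∈ s, μ (B i)) ^ 2 := by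
  classical
  have hterm : ∀ i ∈ s, ∀ j ∈ s,
      μ (B i ∩ B j) ≤ (if i = j then μ (B i) else 0) + c * μ (B i) * μ (B j) := by
    intro i hi j hj
    by_cases hij : i = j
    · subst hij; simp
    · simpa [hij] using hquasi i hi j hj hij
  calc ∑ i ∈ s, ∑ j ∈ s, μ (B i ∩ B j)
      ≤ ∑ i ∈ s, ∑ j ∈ s, ((if i = j then μ (B i) else 0) + c * μ (B i) * μ (B j)) :=
        Finset.sum_le_sum fun i hi => Finset.sum_le_sum fun j hj => hterm i hi j hj
    _ = _ := by
        simp only [Finset.sum_add_distrib, Finset.sum_ite_eq, Finset.sum_ite_mem, Finset.inter_self]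
        rw [sq, Finset.sum_mul_sum, Finset.mul_sum]
        simp only [Finset.mul_sum, mul_assoc]

theorem one_le_mul_measure_biUnion_of_quasi_indep (c : ℝ≥0) (s : Finset ι) {B : ι → Set α}
    (hB : ∀ i, MeasurableSet (B i)) (hB_fin : ∀ i ∈ s, μ (B i) ≠ ∞)
    (hquasi : ∀ i ∈ s, ∀ j ∈ s, i ≠ j → μ (B i ∩ B j) ≤ c * μ (B i) * μ (B j))
    (hs : 1 ≤ ∑ i ∈ s, μ (B i)) :
    1 ≤ (1 + c) * μ (⋃ i ∈ s, B i) := by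
  set T := ∑ i ∈ s, μ (B i)
  have hT_top : T ≠ ∞ := ENNReal.sum_ne_top.2 hB_fin
  have hT_sq_ne_zero : T ^ 2 ≠ 0 := pow_ne_zero 2 (one_pos.trans_le hs).ne'
  have hT_sq_ne_top : T ^ 2 ≠ ∞ := ENNReal.pow_ne_top hT_top
  have hT_le_sq : T ≤ T ^ 2 := by
    simpa [sq] using mul_le_mul_right hs T
  rw [← ENNReal.mul_le_mul_iff_left hT_sq_ne_zero hT_sq_ne_top, one_mul]
  calc T ^ 2 ≤ μ (⋃ i ∈ s, B i) * (T + c * T ^ 2) :=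
        (sq_sum_measure_le_measure_biUnion_mul_sum_sum_measure_inter s hB).trans
          (mul_le_mul_right (sum_sum_measure_inter_le_of_quasi_indep s hquasi) _)
    _ ≤ μ (⋃ i ∈ s, B i) * (T ^ 2 + c * T ^ 2) := by gcongr
    _ = (1 + c) * μ (⋃ i ∈ s, B i) * T ^ 2 := by ring

theorem le_measure_limsup_atTop_of_forall_le [IsFiniteMeasure μ] {s : ℕ → Set α}
    (hs : ∀ n, MeasurableSet (s n)) {δ : ℝ≥0∞} (hδ : ∀ n, δ ≤ μ (⋃ k ≥ n, s k)) :
    δ ≤ μ (limsup s atTop) := by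
  have hanti : Antitone fun n => ⋃ k ≥ n, s k := fun m n hmn =>
    iUnion₂_mono' fun k hk => ⟨k, hmn.trans hk, subset_rfl⟩
  rw [limsup_eq_iInf_iSup_of_nat, iInf_eq_iInter]
  simp only [iSup_eq_iUnion]
  rw [hanti.measure_iInter (fun n => (MeasurableSet.biUnion (to_countable _)
    fun k _ => hs k).nullMeasurableSet) ⟨0, measure_ne_top μ _⟩]
  exact le_iInf hδ

theorem inv_one_add_le_measure_iUnion_ge_of_quasi_indep [IsFiniteMeasure μ] (c : ℝ≥0)
    {B : ℕ → Set α} (hB : ∀ i, MeasurableSet (B i))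
    (hquasi : ∀ i j, i ≠ j → μ (B i ∩ B j) ≤ c * μ (B i) * μ (B j))
    (hsum : ∑' i, μ (B i) = ∞) (n : ℕ) :
    (1 + (c : ℝ≥0∞))⁻¹ ≤ μ (⋃ k ≥ n, B k) := by
  obtain ⟨N, hN⟩ := ENNReal.exists_le_sum_Ico_of_tsum_eq_top (fun i => measure_ne_top μ (B i))
    hsum n ENNReal.one_ne_top
  calc (1 + (c : ℝ≥0∞))⁻¹ ≤ μ (⋃ i ∈ Finset.Ico n N, B i) :=
        (ENNReal.inv_le_iff_le_mul (by simp) (by simp)).2 <|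
          one_le_mul_measure_biUnion_of_quasi_indep c _ hB (fun i _ => measure_ne_top μ _)
            (fun i _ j _ => hquasi i j) hN
    _ ≤ μ (⋃ k ≥ n, B k) :=
        measure_mono <| iUnion₂_mono' fun k hk => ⟨k, (Finset.mem_Ico.1 hk).1, subset_rfl⟩

end MeasureTheory

theorem stmt0_general {Y : Type*} [MeasurableSpace Y] (ν : Measure Y) [IsFiniteMeasure ν]
    (B : ℕ → Set Y) (hB : ∀ n, MeasurableSet (B n))
    (c : NNReal)
    (hquasi : ∀ n m : ℕ, n ≠ m → ν (B n ∩ B m) ≤ (c : ENNReal) * ν (B n) * ν (B m)) :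
    0 < ν (⋂ n : ℕ, ⋃ k : ℕ, ⋃ _ : n ≤ k, B k) ↔ (∑' n : ℕ, ν (B n)) = ⊤ := by
  have hlimsup : limsup B atTop = ⋂ n : ℕ, ⋃ k : ℕ, ⋃ _ : n ≤ k, B k := by
    rw [limsup_eq_iInf_iSup_of_nat]
    simp only [iInf_eq_iInter, iSup_eq_iUnion]
  rw [← hlimsup]
  refine ⟨fun hpos => ?_, fun hsum => ?_⟩
  · by_contra hfin
    exact hpos.ne' (measure_limsup_atTop_eq_zero hfin)
  · exact (ENNReal.inv_pos.2 (by simp)).trans_le <| le_measure_limsup_atTop_of_forall_le hB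
      (inv_one_add_le_measure_iUnion_ge_of_quasi_indep c hB hquasi hsum)

/-- Borel–Cantelli lemma with quasi-independence: on a finite measure space,
if `ν (B n ∩ B m) ≤ c ν(B n) ν(B m)` for distinct `n, m`, then the limsup set
`B_∞ = ⋂ n, ⋃ k ≥ n, B k` has positive measure iff `∑ ν (B n)` diverges. -/
theorem stmt0 {Y : Type*} [MeasurableSpace Y] (ν : Measure Y) [IsFiniteMeasure ν]
    (B : ℕ → Set Y) (hB : ∀ n, MeasurableSet (B n))
    (c : NNReal) (hc : 0 < c)
    (hquasi : ∀ n m : ℕ, n ≠ m → ν (B n ∩ B m) ≤ (c : ENNReal) * ν (B n) * ν (B m)) :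
    0 < ν (⋂ n : ℕ, ⋃ k : ℕ, ⋃ _ : n ≤ k, B k) ↔ (∑' n : ℕ, ν (B n)) = ⊤ :=
  stmt0_general ν B hB c hquasi
end

section
/- Let T be a locally finite tree, ∞ an end of T, H∞ a horoball centered at ∞ with associated Hamenstädt distance d_∞ on ∂T − {∞}. For another end r ≠ ∞ and a horoball H_r centered at r disjoint from H∞, set D(r) = d(H∞, H_r), and for s ≥ 0 let H_r(s) be the horoball contained in H_r whose boundary is at distance s from ∂H_r. Then for ξ ∈ ∂T − {∞}, ξ belongs to the shadow O_∞ H_r(s) if and only if d_∞(ξ, r) ≤ e^{−(D(r)+s)}. -/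
open scoped Classical

/-- `c` is a geodesic ray in the graph `G`; it defines an end of the tree. -/
def IsGeodesicRay {V : Type*} (G : SimpleGraph V) (c : ℕ → V) : Prop :=
  ∀ m n : ℕ, G.dist (c m) (c n) = Nat.dist m n

/-- `ℓ` is a (bi-infinite) geodesic line: an isometric embedding of `ℤ`. -/
def IsGeodesicLine {V : Type*} (G : SimpleGraph V) (ℓ : ℤ → V) : Prop :=
  ∀ m n : ℤ, G.dist (ℓ m) (ℓ n) = (m - n).natAbs

/-- Busemann function of the end determined by the ray `c`; horoballs centered at this
end are the sets `{x | t ≤ busemann G c x}`. -/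
noncomputable def busemann {V : Type*} (G : SimpleGraph V) (c : ℕ → V) (x : V) : ℤ :=
  sSup {m : ℤ | ∃ n : ℕ, m = (n : ℤ) - (G.dist x (c n) : ℤ)}

/-- The negative end of the geodesic line `ℓ` is the end `∞` of the ray `c`. -/
def NegEndIs {V : Type*} (ℓ : ℤ → V) (c : ℕ → V) : Prop :=
  ∃ a : ℤ, ∃ b : ℕ, ∀ n : ℕ, ℓ (a - n) = c (b + n)

/-- The Hamenstädt distance associated to the horoball `H∞` between two points of
`∂T − {∞}`, represented by geodesic lines from `∞` normalized so that they cross the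
horosphere `∂H∞` at time `0`. -/
noncomputable def hamDist {V : Type*} (ℓ ℓ' : ℤ → V) : ℝ :=
  if ℓ = ℓ' then 0
  else Real.exp (-((sSup {n : ℤ | ∀ k ≤ n, ℓ k = ℓ' k} : ℤ) : ℝ))

/-!
A line `ℓ` from `∞` and the line `ℓr` towards `r` coincide exactly up to their branch time `M`,
and `d_∞(ξ, r) = e^{-M}`. In a tree, running back along `ℓ` to time `M` and then forward along
`ℓr` never backtracks, hence is again a geodesic line; so the Busemann function of `r` along `ℓ`
is `n ↦ min n (2M - n)`. Its maximum `M` is at least `D(r) + s` exactly when `ℓ` enters `H_r(s)`.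
-/

namespace SimpleGraph

variable {V : Type*} {G : SimpleGraph V}

lemma IsTree.dist_eq_length_of_isPath (hT : G.IsTree) {u v : V} {p : G.Walk u v}
    (hp : p.IsPath) : G.dist u v = p.length := by
  obtain ⟨q, hq, hlen⟩ := hT.connected.exists_path_of_dist u v
  rw [← hlen, (hT.existsUnique_path u v).unique hq hp]

def walkAlong (f : ℕ → V) (hf : ∀ n, G.Adj (f n) (f (n + 1))) : (n : ℕ) → G.Walk (f 0) (f n)
  | 0 => .nil
  | n + 1 => (walkAlong f hf n).concat (hf n)

variable {f : ℕ → V} {hf : ∀ n, G.Adj (f n) (f (n + 1))}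

@[simp]
lemma length_walkAlong (n : ℕ) : (walkAlong f hf n).length = n := by
  induction n with
  | zero => rfl
  | succ n ih => simp [walkAlong, ih]

lemma IsAcyclic.isPath_walkAlong (hG : G.IsAcyclic) (hnb : ∀ n, f n ≠ f (n + 2)) (n : ℕ) :
    (walkAlong f hf n).IsPath := by
  induction n with
  | zero => exact .nil
  | succ n ih =>
    refine ih.concat (fun hmem => ?_) (hf n)
    have hpen := hG.eq_penultimate_of_adj_end ih (hf n) hmem
    cases n with
    | zero => exact (hf 0).ne' hpen
    | succ m => exact hnb m (by simpa [walkAlong] using hpen.symm)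

lemma IsTree.dist_eq_of_adj_of_ne (hT : G.IsTree) (hf : ∀ n, G.Adj (f n) (f (n + 1)))
    (hnb : ∀ n, f n ≠ f (n + 2)) (n : ℕ) :
    G.dist (f 0) (f n) = n := by
  rw [hT.dist_eq_length_of_isPath (hT.isAcyclic.isPath_walkAlong (hf := hf) hnb n),
    length_walkAlong]

end SimpleGraph

open SimpleGraph

section

variable {V : Type*} {G : SimpleGraph V}

namespace IsGeodesicLine

variable {ℓ : ℤ → V}

lemma adj (hℓ : IsGeodesicLine G ℓ) (k : ℤ) : G.Adj (ℓ k) (ℓ (k + 1)) := by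
  rw [← dist_eq_one_iff_adj, hℓ]
  omega

lemma apply_ne_apply_add_two (hℓ : IsGeodesicLine G ℓ) (k : ℤ) : ℓ k ≠ ℓ (k + 2) := by
  intro h
  have := hℓ k (k + 2)
  rw [h, dist_self] at this
  omega

lemma isGeodesicRay (hℓ : IsGeodesicLine G ℓ) : IsGeodesicRay G (fun n : ℕ => ℓ n) := by
  intro m n
  rw [hℓ, Nat.dist]
  omega

end IsGeodesicLine

lemma SimpleGraph.IsTree.isGeodesicLine_of_adj_of_ne (hT : G.IsTree) {g : ℤ → V}
    (hadj : ∀ k, G.Adj (g k) (g (k + 1))) (hnb : ∀ k, g k ≠ g (k + 2)) :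
    IsGeodesicLine G g := by
  have hdist (p : ℤ) (n : ℕ) : G.dist (g p) (g (p + n)) = n := by
    simpa using hT.dist_eq_of_adj_of_ne (f := fun k : ℕ => g (p + k))
      (fun k => by simpa [add_assoc] using hadj (p + k))
      (fun k => by simpa [add_assoc] using hnb (p + k)) n
  intro m n
  rcases le_total m n with h | h
  · obtain ⟨k, rfl⟩ : ∃ k : ℕ, n = m + k := ⟨(n - m).toNat, by omega⟩
    rw [hdist]
    omega
  · obtain ⟨k, rfl⟩ : ∃ k : ℕ, m = n + k := ⟨(m - n).toNat, by omega⟩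
    rw [SimpleGraph.dist_comm, hdist]
    omega

/-- Along a geodesic ray `n - d(x, c n)` is nondecreasing, so the supremum is the eventual value. -/
lemma busemann_eq_of_eventually_eq (hG : G.Connected) {c : ℕ → V} (hc : IsGeodesicRay G c)
    {x : V} {v : ℤ} (N : ℕ) (h : ∀ n ≥ N, (n : ℤ) - G.dist x (c n) = v) :
    busemann G c x = v := by
  have hmono : Monotone fun n : ℕ => (n : ℤ) - G.dist x (c n) := by
    refine monotone_nat_of_le_succ fun n => ?_
    have htri : G.dist x (c (n + 1)) ≤ G.dist x (c n) + G.dist (c n) (c (n + 1)) :=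
      hG.dist_triangle
    rw [hc, Nat.dist] at htri
    push_cast
    omega
  refine IsGreatest.csSup_eq ⟨⟨N, (h N le_rfl).symm⟩, ?_⟩
  rintro _ ⟨n, rfl⟩
  exact (hmono (le_max_left n N)).trans_eq (h _ (le_max_right n N))

lemma IsGeodesicLine.busemann_apply (hG : G.Connected) {c : ℕ → V} (hc : IsGeodesicRay G c)
    {ℓ : ℤ → V} (hℓ : IsGeodesicLine G ℓ) (N : ℕ) (hcℓ : ∀ n ≥ N, c n = ℓ n) (k : ℤ) :
    busemann G c (ℓ k) = k :=
  busemann_eq_of_eventually_eq hG hc (max N k.toNat) fun n hn => by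
    rw [hcℓ n (le_of_max_le_left hn), hℓ]
    omega

lemma NegEndIs.exists_eq_ray (hG : G.Connected) {c : ℕ → V} (hc : IsGeodesicRay G c)
    {ℓ : ℤ → V} (hℓ : IsGeodesicLine G ℓ) (hn : NegEndIs ℓ c) :
    ∃ a : ℤ, ∀ k ≤ a, ℓ k = c (busemann G c (ℓ 0) - k).toNat := by
  obtain ⟨a, b, hab⟩ := hn
  have hray (k : ℤ) (hk : k ≤ a) : ℓ k = c (b + (a - k).toNat) := by
    rw [← hab, show a - ((a - k).toNat : ℕ) = k by omega]
  have hbus : busemann G c (ℓ 0) = b + a :=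
    busemann_eq_of_eventually_eq hG hc (b + a.toNat) fun n hn => by
      obtain ⟨m, rfl⟩ : ∃ m : ℕ, n = b + m := ⟨n - b, by omega⟩
      rw [← hab, hℓ]
      omega
  refine ⟨a, fun k hk => ?_⟩
  rw [hray k hk, hbus]
  congr 1
  omega

lemma NegEndIs.exists_eqOn_Iic (hG : G.Connected) {c : ℕ → V} (hc : IsGeodesicRay G c)
    {ℓ ℓ' : ℤ → V} (hℓ : IsGeodesicLine G ℓ) (hℓ' : IsGeodesicLine G ℓ') (hn : NegEndIs ℓ c)
    (hn' : NegEndIs ℓ' c) (hb : busemann G c (ℓ 0) = busemann G c (ℓ' 0)) :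
    ∃ a : ℤ, ∀ k ≤ a, ℓ k = ℓ' k := by
  obtain ⟨a, ha⟩ := hn.exists_eq_ray hG hc hℓ
  obtain ⟨a', ha'⟩ := hn'.exists_eq_ray hG hc hℓ'
  exact ⟨min a a', fun k hk => by rw [ha k (by omega), ha' k (by omega), hb]⟩

section Branching

variable {α : Type*} {ℓ ℓ' : ℤ → α}

noncomputable def branchTime (ℓ ℓ' : ℤ → α) : ℤ :=
  sSup {n : ℤ | ∀ k ≤ n, ℓ k = ℓ' k}

lemma hamDist_of_ne (h : ℓ ≠ ℓ') : hamDist ℓ ℓ' = Real.exp (-(branchTime ℓ ℓ' : ℝ)) :=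
  if_neg h

lemma bddAbove_setOf_eqOn_Iic (h : ℓ ≠ ℓ') : BddAbove {n : ℤ | ∀ k ≤ n, ℓ k = ℓ' k} := by
  obtain ⟨j, hj⟩ := Function.ne_iff.mp h
  exact ⟨j, fun n hn => not_lt.mp fun hjn => hj (hn j hjn.le)⟩

lemma eq_of_le_branchTime (h : ℓ ≠ ℓ') (hagree : ∃ a : ℤ, ∀ k ≤ a, ℓ k = ℓ' k) :
    ∀ k ≤ branchTime ℓ ℓ', ℓ k = ℓ' k :=
  Int.csSup_mem hagree (bddAbove_setOf_eqOn_Iic h)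

lemma apply_branchTime_add_one_ne (h : ℓ ≠ ℓ') (hagree : ∃ a : ℤ, ∀ k ≤ a, ℓ k = ℓ' k) :
    ℓ (branchTime ℓ ℓ' + 1) ≠ ℓ' (branchTime ℓ ℓ' + 1) := by
  intro heq
  have hmem : branchTime ℓ ℓ' + 1 ≤ branchTime ℓ ℓ' :=
    le_csSup (bddAbove_setOf_eqOn_Iic h) fun k hk => by
      rcases (Int.le_add_one_iff.mp hk) with hk | rfl
      · exact eq_of_le_branchTime h hagree k hk
      · exact heq
  omega

def foldAt (ℓ ℓ' : ℤ → α) (M : ℤ) (k : ℤ) : α :=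
  if k ≤ M then ℓ (2 * M - k) else ℓ' k

end Branching

lemma SimpleGraph.IsTree.isGeodesicLine_foldAt (hT : G.IsTree) {ℓ ℓ' : ℤ → V}
    (hℓ : IsGeodesicLine G ℓ) (hℓ' : IsGeodesicLine G ℓ') {M : ℤ} (hM : ℓ M = ℓ' M)
    (hM1 : ℓ (M + 1) ≠ ℓ' (M + 1)) :
    IsGeodesicLine G (foldAt ℓ ℓ' M) := by
  have hback (k : ℤ) : G.Adj (ℓ (k + 1)) (ℓ k) := (hℓ.adj k).symm
  apply hT.isGeodesicLine_of_adj_of_ne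
  · intro k
    simp only [foldAt]
    split_ifs with hk hk1 hk1
    · simpa [show 2 * M - k = 2 * M - (k + 1) + 1 by ring] using hback (2 * M - (k + 1))
    · obtain rfl : k = M := by omega
      simpa [two_mul, hM] using hℓ'.adj k
    · omega
    · exact hℓ'.adj k
  · intro k
    simp only [foldAt]
    split_ifs with hk hk2
    · simpa [show 2 * M - k = 2 * M - (k + 2) + 2 by ring] using
        (hℓ.apply_ne_apply_add_two (2 * M - (k + 2))).symm
    · rcases (show k = M - 1 ∨ k = M by omega) with rfl | rfl
      · simpa [show 2 * M - (M - 1) = M + 1 by ring, show M - 1 + 2 = M + 1 by ring] using hM1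
      · simpa [two_mul, hM] using hℓ'.apply_ne_apply_add_two k
    · omega
    · exact hℓ'.apply_ne_apply_add_two k

lemma SimpleGraph.IsTree.busemann_apply_eq_min (hT : G.IsTree) {ℓ ℓ' : ℤ → V}
    (hℓ : IsGeodesicLine G ℓ) (hℓ' : IsGeodesicLine G ℓ') (h : ℓ ≠ ℓ')
    (hagree : ∃ a : ℤ, ∀ k ≤ a, ℓ k = ℓ' k) (n : ℤ) :
    busemann G (fun m : ℕ => ℓ' m) (ℓ n) = min n (2 * branchTime ℓ ℓ' - n) := by
  set M := branchTime ℓ ℓ'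
  have hagreeM := eq_of_le_branchTime h hagree
  rcases le_total n M with hn | hn
  · rw [hagreeM n hn,
      hℓ'.busemann_apply hT.connected hℓ'.isGeodesicRay 0 (fun _ _ => rfl)]
    omega
  · have hfold := hT.isGeodesicLine_foldAt hℓ hℓ' (hagreeM M le_rfl)
      (apply_branchTime_add_one_ne h hagree)
    have hn' : ℓ n = foldAt ℓ ℓ' M (2 * M - n) := by
      simp [foldAt, show 2 * M - n ≤ M by omega]
    have htail (m : ℕ) (hm : m ≥ M.toNat) : ℓ' m = foldAt ℓ ℓ' M m := by
      unfold foldAt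
      split_ifs with hmM
      · rw [show (m : ℤ) = M by omega, two_mul, add_sub_cancel_right]
        exact (hagreeM M le_rfl).symm
      · rfl
    rw [hn', hfold.busemann_apply hT.connected hℓ'.isGeodesicRay M.toNat htail]
    omega

end

/-- `∞` is the end of the ray `c`, with horoball
`H∞ = {x | t ≤ busemann c x}`. The end `r ≠ ∞` is the positive end of the normalized
geodesic line `ℓr` from `∞` (crossing `∂H∞` at `ℓr 0`); the horoball `H_r` centered
at `r` is `{x | u ≤ busemann c_r x}` for the ray `c_r = ℓr|ℕ`, so that it is disjoint
from `H∞` with `D(r) = d(H∞, H_r) = u`, and `H_r(s)` is the horoball at further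
distance `s` inside `H_r`. A point `ξ ∈ ∂T − {∞}` is the positive end of a normalized
line `ℓ` from `∞`, and it lies in the shadow `O_∞ H_r(s)` iff `ℓ` meets `H_r(s)`. -/
theorem stmt14_general {V : Type*} (G : SimpleGraph V) (hT : G.IsTree)
    (c : ℕ → V) (hc : IsGeodesicRay G c) (t : ℤ)
    (ℓr : ℤ → V) (hℓr : IsGeodesicLine G ℓr) (hnr : NegEndIs ℓr c)
    (hbr : busemann G c (ℓr 0) = t)
    (u s : ℕ)
    (ℓ : ℤ → V) (hℓ : IsGeodesicLine G ℓ) (hn : NegEndIs ℓ c)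
    (hb : busemann G c (ℓ 0) = t) :
    (∃ n : ℤ, ((u + s : ℕ) : ℤ) ≤ busemann G (fun m : ℕ => ℓr (m : ℤ)) (ℓ n)) ↔
      hamDist ℓ ℓr ≤ Real.exp (-((u + s : ℕ) : ℝ)) := by
  by_cases hEq : ℓ = ℓr
  · subst hEq
    rw [hamDist, if_pos rfl]
    exact iff_of_true
      ⟨u + s, (hℓ.busemann_apply hT.connected hℓ.isGeodesicRay 0 (fun _ _ => rfl) _).ge⟩
      (Real.exp_pos _).le
  · have hagree := NegEndIs.exists_eqOn_Iic hT.connected hc hℓ hℓr hn hnr (hb.trans hbr.symm)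
    simp_rw [hT.busemann_apply_eq_min hℓ hℓr hEq hagree, hamDist_of_ne hEq, Real.exp_le_exp,
      neg_le_neg_iff]
    constructor
    · rintro ⟨n, hN⟩
      exact_mod_cast (show ((u + s : ℕ) : ℤ) ≤ branchTime ℓ ℓr by omega)
    · intro h
      have h' : ((u + s : ℕ) : ℤ) ≤ branchTime ℓ ℓr := by exact_mod_cast h
      exact ⟨branchTime ℓ ℓr, by omega⟩

/-- Shadow computation. `∞` is the end of the ray `c`, with horoball
`H∞ = {x | t ≤ busemann c x}`. The end `r ≠ ∞` is the positive end of the normalized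
geodesic line `ℓr` from `∞` (crossing `∂H∞` at `ℓr 0`); the horoball `H_r` centered
at `r` is `{x | u ≤ busemann c_r x}` for the ray `c_r = ℓr|ℕ`, so that it is disjoint
from `H∞` with `D(r) = d(H∞, H_r) = u`, and `H_r(s)` is the horoball at further
distance `s` inside `H_r`. A point `ξ ∈ ∂T − {∞}` (positive end of a normalized line
`ℓ` from `∞`) lies in the shadow `O_∞ H_r(s)` (i.e. `ℓ` meets `H_r(s)`) if and only if
`d_∞(ξ, r) ≤ e^{-(D(r)+s)}`. -/
theorem stmt14 {V : Type*} (G : SimpleGraph V) (hT : G.IsTree)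
    (hlf : ∀ v : V, (G.neighborSet v).Finite)
    (c : ℕ → V) (hc : IsGeodesicRay G c) (t : ℤ)
    (ℓr : ℤ → V) (hℓr : IsGeodesicLine G ℓr) (hnr : NegEndIs ℓr c)
    (hbr : busemann G c (ℓr 0) = t)
    (u s : ℕ)
    (ℓ : ℤ → V) (hℓ : IsGeodesicLine G ℓ) (hn : NegEndIs ℓ c)
    (hb : busemann G c (ℓ 0) = t) :
    (∃ n : ℤ, ((u + s : ℕ) : ℤ) ≤ busemann G (fun m : ℕ => ℓr (m : ℤ)) (ℓ n)) ↔
      hamDist ℓ ℓr ≤ Real.exp (-((u + s : ℕ) : ℝ)) :=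
  stmt14_general G hT c hc t ℓr hℓr hnr hbr u s ℓ hℓ hn hb
end

section
/- Let (a_n)_{n≥0} be a sequence of nonnegative reals and δ > 0, c₁ > 0 such that (1/c₁)e^{δn} ≤ ∑_{k=0}^n a_k ≤ c₁ e^{δn} for all n ∈ ℕ. Then there exist an integer N ≥ 1 and a constant c₃ > 0 such that for every n ∈ ℕ, (1/c₃)e^{δn} ≤ ∑_{k=n}^{n+N−1} a_k ≤ c₃ e^{δn}. -/
/-- Counting-window lemma: if the partial sums of a nonnegative sequence satisfy
two-sided exponential bounds `(1/c₁) e^{δn} ≤ ∑_{k=0}^n a_k ≤ c₁ e^{δn}`, then there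
are `N ≥ 1` and `c₃ > 0` with `(1/c₃) e^{δn} ≤ ∑_{k=n}^{n+N-1} a_k ≤ c₃ e^{δn}`
for all `n`. -/
theorem stmt15 (a : ℕ → ℝ) (ha : ∀ n, 0 ≤ a n)
    (δ c₁ : ℝ) (hδ : 0 < δ) (hc₁ : 0 < c₁)
    (hlb : ∀ n : ℕ, (1 / c₁) * Real.exp (δ * n) ≤ ∑ k ∈ Finset.range (n + 1), a k)
    (hub : ∀ n : ℕ, ∑ k ∈ Finset.range (n + 1), a k ≤ c₁ * Real.exp (δ * n)) :
    ∃ N : ℕ, 1 ≤ N ∧ ∃ c₃ : ℝ, 0 < c₃ ∧ ∀ n : ℕ,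
      (1 / c₃) * Real.exp (δ * n) ≤ ∑ k ∈ Finset.Ico n (n + N), a k ∧
      ∑ k ∈ Finset.Ico n (n + N), a k ≤ c₃ * Real.exp (δ * n) := by
  have hE1 : (1 : ℝ) < Real.exp δ := by
    rw [Real.one_lt_exp_iff]; exact hδ
  obtain ⟨M, hM⟩ := pow_unbounded_of_one_lt (c₁ ^ 2 + c₁) hE1
  have hPdef : Real.exp (δ * M) = Real.exp δ ^ M := by
    rw [mul_comm, Real.exp_nat_mul]
  set E : ℝ := Real.exp δ with hE
  set P : ℝ := Real.exp (δ * M) with hPd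
  have hP : c₁ ^ 2 + c₁ < P := by rw [hPdef]; exact hM
  have hEpos : 0 < E := Real.exp_pos δ
  have hPpos : 0 < P := Real.exp_pos _
  refine ⟨M + 1, le_add_self, c₁ * P + E, by positivity, fun n => ?_⟩
  have hc₃pos : (0 : ℝ) < c₁ * P + E := by positivity
  have hc₃ge1 : (1 : ℝ) ≤ c₁ * P + E := le_trans hE1.le (le_add_of_nonneg_left (by positivity))
  have hEge : E ≤ c₁ * P + E := le_add_of_nonneg_left (by positivity)
  have hc₁le : c₁ ≤ c₁ * P + E := by
    have hP1 : (1 : ℝ) ≤ P := Real.one_le_exp (by positivity)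
    nlinarith
  constructor
  · -- lower bound
    cases n with
    | zero =>
      have h0 : Finset.Ico 0 (0 + (M + 1)) = Finset.range (M + 1) := by
        rw [Finset.range_eq_Ico]
        congr 1
        omega
      rw [h0]
      have h1 := hlb M
      have hP1 : (1 : ℝ) ≤ P := Real.one_le_exp (by positivity)
      have h2 : 1 / (c₁ * P + E) ≤ (1 / c₁) * P := by
        rw [div_le_iff₀ hc₃pos]
        have : 1 / c₁ * P * (c₁ * P + E) = P * P + (P / c₁) * E := by field_simp
        rw [this]
        nlinarith [div_pos hPpos hc₁, mul_pos (div_pos hPpos hc₁) hEpos]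
      simp only [Nat.cast_zero, mul_zero, Real.exp_zero, mul_one]
      exact le_trans h2 h1
    | succ m =>
      have hsub : ∑ k ∈ Finset.Ico (m + 1) (m + 1 + (M + 1)), a k
          = ∑ k ∈ Finset.range (m + M + 1 + 1), a k - ∑ k ∈ Finset.range (m + 1), a k := by
        have e : m + 1 + (M + 1) = m + M + 1 + 1 := by omega
        rw [e, Finset.sum_Ico_eq_sub a (by omega)]
      rw [hsub]
      have h1 := hlb (m + M + 1)
      have h2 := hub m
      have hx : Real.exp (δ * ((m : ℕ) + M + 1 : ℕ)) = Real.exp (δ * m) * P * E := by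
        push_cast
        rw [show δ * ((m : ℝ) + M + 1) = δ * m + δ * M + δ by ring, Real.exp_add, Real.exp_add]
      have hy : Real.exp (δ * ((m : ℕ) + 1 : ℕ)) = Real.exp (δ * m) * E := by
        push_cast
        rw [show δ * ((m : ℝ) + 1) = δ * m + δ by ring, Real.exp_add]
      rw [hx] at h1
      rw [hy]
      set Em : ℝ := Real.exp (δ * m) with hEm
      have hEmpos : 0 < Em := Real.exp_pos _
      have key : 1 / (c₁ * P + E) * (Em * E) ≤ 1 / c₁ * (Em * P * E) - c₁ * Em := by
        have hsmall : 1 / (c₁ * P + E) * (Em * E) ≤ Em * E := by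
          have h3 : 1 / (c₁ * P + E) ≤ 1 := by
            rw [div_le_one hc₃pos]; exact hc₃ge1
          nlinarith [mul_pos hEmpos hEpos]
        refine le_trans hsmall ?_
        rw [le_sub_iff_add_le, one_div, inv_mul_eq_div, le_div_iff₀ hc₁]
        nlinarith [mul_le_mul_of_nonneg_right
          (mul_le_mul_of_nonneg_left hP.le hEmpos.le) hEpos.le,
          mul_nonneg (mul_nonneg (sq_nonneg c₁) hEmpos.le) (sub_nonneg.2 hE1.le)]
      linarith
  · -- upper bound
    have hsubset : Finset.Ico n (n + (M + 1)) ⊆ Finset.range (n + M + 1) := by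
      rw [Finset.range_eq_Ico]
      apply Finset.Ico_subset_Ico (Nat.zero_le n)
      omega
    have h1 : ∑ k ∈ Finset.Ico n (n + (M + 1)), a k ≤ ∑ k ∈ Finset.range (n + M + 1), a k :=
      Finset.sum_le_sum_of_subset_of_nonneg hsubset (fun i _ _ => ha i)
    have h2 := hub (n + M)
    have hx : Real.exp (δ * ((n : ℕ) + M : ℕ)) = Real.exp (δ * n) * P := by
      push_cast
      rw [show δ * ((n : ℝ) + M) = δ * n + δ * M by ring, Real.exp_add]
    rw [hx] at h2
    have h3 : ∑ k ∈ Finset.range (n + M + 1), a k ≤ c₁ * (Real.exp (δ * n) * P) := by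
      convert h2 using 3
    calc ∑ k ∈ Finset.Ico n (n + (M + 1)), a k ≤ c₁ * (Real.exp (δ * n) * P) :=
          le_trans h1 h3
      _ ≤ (c₁ * P + E) * Real.exp (δ * n) := by
          nlinarith [Real.exp_pos (δ * n), mul_pos hEpos (Real.exp_pos (δ * n))]
end
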